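/- arXiv:1202.1791 — 4 statements merged into one kernel-verified Lean document; each statement's English description precedes it below -/
import Mathlib

section
/- Let $X:\Omega\times[0,2\pi]\to\mathbb{R}$ be $C^2$ and $2\pi$-periodic in $t$, and let $\bar{x}$ be a $2\pi$-periodic $C^1$ function that is noncritical, with deformation constant $M$ and accuracy $S=\|\bar{x}'-X(\bar{x}(\cdot),\cdot)\|_2$. Let $I=[\min_t\bar{x}(t)-2MS,\max_t\bar{x}(t)+2MS]\subset\Omega$ and $K\ge\max_{(x,t)\in I\times[0,2\pi]}|\partial^2_x X(x,t)|$. If $2M^2KS<1$, then there exists a $2\pi$-periodic solution $x^*$ of $x'=X(x,t)$ with $\|x^*-\bar{x}\|_\infty\le 2MS$, and $x^*$ is the unique periodic solution of the equation entirely contained in the strip $\{(x,t):|x-\bar{x}(t)|\le 2MS\}$. -/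
/-!
Writing `x = x̄ + z`, the equation `x' = X(x, t)` becomes `z' = a(t) z + G(t, z)` with
`a(t) = ∂ₓX(x̄(t), t)` and `G(t, z) = X(x̄(t) + z, t) - x̄'(t) - a(t) z`. On the strip
`|z| ≤ R = 2MS`, `G(t, ·)` is `KR`-Lipschitz, `G(t, 0)` is minus the defect, of `L²` size `S`, and
`|G(t, z) - G(t, 0)| ≤ K z² / 2 ≤ K R² / 2`. The deformation constant says that the periodic
solution operator of `y' = a y + b` is `M`-bounded from `L²` to `C⁰`, so the map sending `z` to the
periodic solution of `y' = a y + G(t, z)` maps the set of continuous periodic `z` with `|z| ≤ R`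
into itself (as `M (S + K R² / 2) = M S (1 + 2M²KS) ≤ R`) and is a contraction with constant
`2M²KS < 1`. Its fixed point is the solution, and uniqueness of the fixed point is uniqueness in
the strip.

Since `∂ₓX` is not assumed continuous in `t`, the continuity of `a` has to be proved: thanks to the
bound `K`, `a` is the uniform limit of the continuous difference quotients
`n (X(x̄ + 1/n, t) - X(x̄, t))`. Even without that bound, Baire's theorem applied to the same quotients
still makes `a` continuous on an open interval, and a bump function supported there shows `M > 0`.
If `S = 0`, `x̄` itself is the solution and the strip is its graph.
-/

open Real Set Filter Topology Function
open scoped BoundedContinuousFunction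

theorem Function.Periodic.deriv {f : ℝ → ℝ} {c : ℝ} (hf : Periodic f c) : Periodic (deriv f) c :=
  fun x => by rw [← deriv_comp_add_const, funext hf]

theorem Function.Periodic.continuousAt_of_continuousAt_sub_int_mul {f : ℝ → ℝ} {c : ℝ}
    (hf : Periodic f c) {t : ℝ} (k : ℤ) (h : ContinuousAt f (t - k * c)) : ContinuousAt f t := by
  rw [← funext fun s => hf.sub_int_mul_eq (x := s) k]
  exact ContinuousAt.comp (f := fun s => s - k * c) h (continuous_sub_right _).continuousAt

theorem Function.Periodic.periodic_of_hasDerivAt {f f' : ℝ → ℝ} {c : ℝ} (hf : Periodic f c)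
    (hf' : ∀ x, HasDerivAt f (f' x) x) : Periodic f' c := fun x => by
  rw [← (hf' _).deriv, ← (hf' x).deriv, hf.deriv x]

theorem abs_sub_sub_deriv_mul_le {f f' : ℝ → ℝ} (hf : ∀ x, HasDerivAt f (f' x) x)
    {s : Set ℝ} (hs : Convex ℝ s) {c L : ℝ} (hL : ∀ x ∈ s, |f' x - f' c| ≤ L) {u v : ℝ}
    (hu : u ∈ s) (hv : v ∈ s) : |f v - f u - f' c * (v - u)| ≤ L * |v - u| := by
  have hg : ∀ x ∈ s, HasDerivWithinAt (fun x => f x - f' c * x) (f' x - f' c) s x := fun x _ =>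
    (((hf x).sub ((hasDerivAt_id x).const_mul (f' c))).congr_deriv (by ring)).hasDerivWithinAt
  have := hs.norm_image_sub_le_of_norm_hasDerivWithin_le hg hL hu hv
  simp only [Real.norm_eq_abs] at this
  convert this using 2
  ring

theorem abs_sub_sub_deriv_mul_le_of_lipschitz {f f' : ℝ → ℝ} (hf : ∀ x, HasDerivAt f (f' x) x)
    {u v K : ℝ} (hK : ∀ x ∈ uIcc u v, |f' x - f' u| ≤ K * |x - u|) :
    |f v - f u - f' u * (v - u)| ≤ K / 2 * (v - u) ^ 2 := by
  have cauchy : ∀ a b, a < b → ∃ ξ ∈ Ioo a b, ((b - u) ^ 2 - (a - u) ^ 2) * (f' ξ - f' u) =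
      (f b - f' u * b - (f a - f' u * a)) * (2 * (ξ - u)) := fun a b hab => by
    have hd : ∀ x, HasDerivAt (fun x => f x - f' u * x) (f' x - f' u) x := fun x =>
      ((hf x).sub ((hasDerivAt_id x).const_mul (f' u))).congr_deriv (by ring)
    have hq : ∀ x, HasDerivAt (fun x => (x - u) ^ 2) (2 * (x - u)) x := fun x =>
      (((hasDerivAt_id x).sub_const u).pow 2).congr_deriv (by simp)
    exact exists_ratio_hasDerivAt_eq_ratio_slope _ _ hab
      (continuous_iff_continuousAt.2 fun x => (hd x).continuousAt).continuousOn
      (fun x _ => hd x) _ _ (by fun_prop) (fun x _ => hq x)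
  rcases eq_or_ne u v with rfl | huv
  · simp
  obtain ⟨ξ, hξ, hξu, heq⟩ : ∃ ξ ∈ uIcc u v, ξ ≠ u ∧ (v - u) ^ 2 * (f' ξ - f' u) =
      (f v - f u - f' u * (v - u)) * (2 * (ξ - u)) := by
    rcases huv.lt_or_gt with h | h
    · obtain ⟨ξ, hξ, heq⟩ := cauchy u v h
      exact ⟨ξ, Icc_subset_uIcc (Ioo_subset_Icc_self hξ), hξ.1.ne', by linear_combination heq⟩
    · obtain ⟨ξ, hξ, heq⟩ := cauchy v u h
      exact ⟨ξ, Icc_subset_uIcc' (Ioo_subset_Icc_self hξ), hξ.2.ne, by linear_combination -heq⟩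
  have hpos : 0 < 2 * |ξ - u| := by positivity [sub_ne_zero.2 hξu]
  refine le_of_mul_le_mul_right ?_ hpos
  calc |f v - f u - f' u * (v - u)| * (2 * |ξ - u|) = (v - u) ^ 2 * |f' ξ - f' u| := by
        rw [← abs_two, ← abs_mul, ← abs_mul, ← heq, abs_mul, abs_of_nonneg (sq_nonneg _)]
    _ ≤ (v - u) ^ 2 * (K * |ξ - u|) := by gcongr; exact hK ξ hξ
    _ = K / 2 * (v - u) ^ 2 * (2 * |ξ - u|) := by ring

theorem abs_sub_deriv_mul_sub_le_of_lipschitz_Icc {f f' : ℝ → ℝ} (hf : ∀ x, HasDerivAt f (f' x) x)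
    {c r K : ℝ} (hK0 : 0 ≤ K) (hK : ∀ x ∈ Icc (c - r) (c + r), |f' x - f' c| ≤ K * |x - c|)
    {z₁ z₂ : ℝ} (h₁ : |z₁| ≤ r) (h₂ : |z₂| ≤ r) :
    |f (c + z₁) - f' c * z₁ - (f (c + z₂) - f' c * z₂)| ≤ K * r * |z₁ - z₂| := by
  have hmem : ∀ {z : ℝ}, |z| ≤ r → c + z ∈ Icc (c - r) (c + r) := fun {z} h =>
    ⟨by linarith [neg_abs_le z], by linarith [le_abs_self z]⟩
  have := abs_sub_sub_deriv_mul_le hf (convex_Icc (c - r) (c + r)) (c := c)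
    (L := K * r) (fun x hx => (hK x hx).trans (mul_le_mul_of_nonneg_left ?_ hK0))
    (hmem h₂) (hmem h₁)
  · convert this using 2 <;> ring_nf
  · exact abs_sub_le_iff.2 ⟨by linarith [hx.2], by linarith [hx.1]⟩

theorem abs_sub_sub_deriv_mul_le_of_lipschitz_Icc {f f' : ℝ → ℝ} (hf : ∀ x, HasDerivAt f (f' x) x)
    {c r K : ℝ} (hK0 : 0 ≤ K) (hK : ∀ x ∈ Icc (c - r) (c + r), |f' x - f' c| ≤ K * |x - c|)
    {z : ℝ} (hz : |z| ≤ r) : |f (c + z) - f c - f' c * z| ≤ K / 2 * r ^ 2 := by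
  have hsub : uIcc c (c + z) ⊆ Icc (c - r) (c + r) := uIcc_subset_Icc
    ⟨by linarith [abs_nonneg z], by linarith [abs_nonneg z]⟩
    ⟨by linarith [neg_abs_le z], by linarith [le_abs_self z]⟩
  calc |f (c + z) - f c - f' c * z| ≤ K / 2 * (c + z - c) ^ 2 := by
        simpa using abs_sub_sub_deriv_mul_le_of_lipschitz hf fun x hx => hK x (hsub hx)
    _ ≤ K / 2 * r ^ 2 := by
        rw [add_sub_cancel_left]
        exact mul_le_mul_of_nonneg_left (sq_le_sq' (neg_le_of_abs_le hz) (le_of_abs_le hz))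
          (by positivity)

theorem abs_mul_sub_sub_deriv_le {f f' : ℝ → ℝ} (hf : ∀ x, HasDerivAt f (f' x) x) {u K : ℝ}
    (hK0 : 0 ≤ K) {n : ℕ} (hn : 0 < n)
    (hK : ∀ x ∈ Icc u (u + (n : ℝ)⁻¹), |f' x - f' u| ≤ K * |x - u|) :
    |n * (f (u + (n : ℝ)⁻¹) - f u) - f' u| ≤ K / n := by
  have hn' : (0 : ℝ) < n := Nat.cast_pos.2 hn
  have hu : u ≤ u + (n : ℝ)⁻¹ := le_add_of_nonneg_right (by positivity)
  have := abs_sub_sub_deriv_mul_le hf (convex_Icc _ _) (c := u) (L := K / n)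
    (fun x hx => (hK x hx).trans ?_) (left_mem_Icc.2 hu) (right_mem_Icc.2 hu)
  · rw [add_sub_cancel_left, abs_of_pos (inv_pos.2 hn')] at this
    calc |n * (f (u + (n : ℝ)⁻¹) - f u) - f' u|
        = n * |f (u + (n : ℝ)⁻¹) - f u - f' u * (n : ℝ)⁻¹| := by
          rw [← abs_of_pos hn', ← abs_mul, abs_of_pos hn']; congr 1; field_simp
      _ ≤ n * (K / n * (n : ℝ)⁻¹) := by gcongr
      _ = K / n := by field_simp
  · rw [abs_of_nonneg (sub_nonneg.2 hx.1), div_eq_mul_inv]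
    exact mul_le_mul_of_nonneg_left (sub_le_iff_le_add'.2 hx.2) hK0

theorem eventually_abs_mul_sub_sub_deriv_le {f f' : ℝ → ℝ} (hf : ∀ x, HasDerivAt f (f' x) x)
    {u K : ℝ} (hK0 : 0 ≤ K) (hK : ∀ᶠ x in 𝓝 u, |f' x - f' u| ≤ K * |x - u|) :
    ∀ᶠ n : ℕ in atTop, |n * (f (u + (n : ℝ)⁻¹) - f u) - f' u| ≤ K / n := by
  obtain ⟨δ, hδ, hball⟩ := Metric.eventually_nhds_iff.1 hK
  filter_upwards [eventually_gt_atTop 0,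
    (tendsto_inv_atTop_nhds_zero_nat (𝕜 := ℝ)).eventually (gt_mem_nhds hδ)] with n hn hnδ
  refine abs_mul_sub_sub_deriv_le hf hK0 hn fun x hx => hball ?_
  rw [Real.dist_eq, abs_of_nonneg (sub_nonneg.2 hx.1)]
  linarith [hx.2]

theorem tendstoUniformlyOn_of_abs_sub_le {α : Type*} {F : ℕ → α → ℝ} {f : α → ℝ} {s : Set α}
    {C : ℝ} (h : ∀ᶠ n in atTop, ∀ x ∈ s, |F n x - f x| ≤ C / n) :
    TendstoUniformlyOn F f atTop s := by
  refine Metric.tendstoUniformlyOn_iff.2 fun ε hε => ?_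
  filter_upwards [h, (tendsto_const_div_atTop_nhds_zero_nat C).eventually (gt_mem_nhds hε)]
    with n hn hnε x hx
  rw [dist_comm, Real.dist_eq]
  exact (hn x hx).trans_lt hnε

theorem exists_isOpen_continuousOn_of_abs_sub_le {α : Type*} [TopologicalSpace α]
    [BaireSpace α] [Nonempty α] {F : ℕ → α → ℝ} {f : α → ℝ} (hF : ∀ n, Continuous (F n))
    (h : ∀ x, ∃ C, ∀ᶠ n in atTop, |F n x - f x| ≤ C / n) :
    ∃ U, IsOpen U ∧ U.Nonempty ∧ ContinuousOn f U := by
  have hlim : ∀ x, Tendsto (fun n => F n x) atTop (𝓝 (f x)) := fun x => by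
    obtain ⟨C, hC⟩ := h x
    exact (tendstoUniformlyOn_of_abs_sub_le (s := {x}) (by simpa using hC)).tendsto_at rfl
  let E : ℕ → Set α := fun m => {x | ∀ n ≥ m, ∀ k ≥ m, |F n x - F k x| ≤ m / n + m / k}
  have hE : ∀ m, IsClosed (E m) := fun m => by
    simp only [E, ofPred_forall]
    exact isClosed_iInter fun n => isClosed_iInter fun _ => isClosed_iInter fun k =>
      isClosed_iInter fun _ => isClosed_le ((hF n).sub (hF k)).abs continuous_const
  have hcover : ⋃ m, E m = univ := by
    refine iUnion_eq_univ_iff.2 fun x => ?_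
    obtain ⟨C, hC⟩ := h x
    obtain ⟨N, hN⟩ := eventually_atTop.1 hC
    refine ⟨max N ⌈C⌉₊, fun n hn k hk => ?_⟩
    have hCm : C ≤ (max N ⌈C⌉₊ : ℕ) := (Nat.le_ceil C).trans (by exact_mod_cast le_max_right _ _)
    calc |F n x - F k x| ≤ |F n x - f x| + |F k x - f x| :=
          (abs_sub_le _ (f x) _).trans_eq (by rw [abs_sub_comm (f x)])
      _ ≤ C / n + C / k := add_le_add (hN n (le_of_max_le_left hn)) (hN k (le_of_max_le_left hk))
      _ ≤ _ := by gcongr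
  obtain ⟨m, hm⟩ := nonempty_interior_of_iUnion_of_closed hE hcover
  refine ⟨interior (E m), isOpen_interior, hm, ?_⟩
  refine (tendstoUniformlyOn_of_abs_sub_le (C := m) ?_).continuousOn
    (Frequently.of_forall fun n => (hF n).continuousOn)
  filter_upwards [eventually_ge_atTop m] with n hn x hx
  have hlim' : Tendsto (fun k : ℕ => (m : ℝ) / n + m / k) atTop (𝓝 (m / n + 0)) :=
    tendsto_const_nhds.add (tendsto_const_div_atTop_nhds_zero_nat _)
  rw [add_zero] at hlim'
  exact le_of_tendsto_of_tendsto ((tendsto_const_nhds.sub (hlim x)).abs) hlim'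
    ((eventually_ge_atTop m).mono fun k hk => interior_subset hx n hn k hk)

theorem exists_int_abs_sub_mul_two_pi_le_of_cos_le {x δ : ℝ} (hδ₀ : 0 ≤ δ) (hδ : δ ≤ π)
    (h : cos δ ≤ cos x) : ∃ k : ℤ, |x - k * (2 * π)| ≤ δ := by
  refine ⟨round (x / (2 * π)), ?_⟩
  have hr : |x - round (x / (2 * π)) * (2 * π)| ≤ π := by
    have hx : x - round (x / (2 * π)) * (2 * π) =
        (x / (2 * π) - round (x / (2 * π))) * (2 * π) := by field_simp
    rw [hx, abs_mul, abs_of_pos two_pi_pos]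
    nlinarith [abs_sub_round (x / (2 * π)), pi_pos]
  by_contra! hlt
  have := cos_lt_cos_of_nonneg_of_le_pi hδ₀ hr hlt
  rw [cos_abs, cos_sub_int_mul_two_pi] at this
  linarith

/-- The norm `‖f‖₂` of the statement. -/
noncomputable def rmsNorm (f : ℝ → ℝ) : ℝ := √(1 / (2 * π) * ∫ s in (0 : ℝ)..2 * π, f s ^ 2)

theorem rmsNorm_nonneg (f : ℝ → ℝ) : 0 ≤ rmsNorm f := sqrt_nonneg _

theorem rmsNorm_le_of_abs_le {f : ℝ → ℝ} (hf : Continuous f) {c : ℝ}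
    (h : ∀ t ∈ Icc 0 (2 * π), |f t| ≤ c) : rmsNorm f ≤ c := by
  have hc : 0 ≤ c := (abs_nonneg _).trans (h 0 ⟨le_rfl, two_pi_pos.le⟩)
  have hint : ∫ s in (0 : ℝ)..2 * π, f s ^ 2 ≤ 2 * π * c ^ 2 := by
    calc ∫ s in (0 : ℝ)..2 * π, f s ^ 2 ≤ ∫ s in (0 : ℝ)..2 * π, c ^ 2 :=
          intervalIntegral.integral_mono_on two_pi_pos.le ((hf.pow 2).intervalIntegrable _ _)
            intervalIntegrable_const fun t ht =>
              sq_le_sq' (neg_le_of_abs_le (h t ht)) (le_of_abs_le (h t ht))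
      _ = 2 * π * c ^ 2 := by simp
  refine (sqrt_le_left hc).2 ?_
  calc 1 / (2 * π) * ∫ s in (0 : ℝ)..2 * π, f s ^ 2 ≤ 1 / (2 * π) * (2 * π * c ^ 2) := by gcongr
    _ = c ^ 2 := by field_simp

theorem eq_zero_of_rmsNorm_eq_zero {f : ℝ → ℝ} (hf : Continuous f) (hp : Periodic f (2 * π))
    (h : rmsNorm f = 0) : f = 0 := by
  have hint : ∫ s in (0 : ℝ)..2 * π, f s ^ 2 ≤ 0 :=
    nonpos_of_mul_nonpos_right (sqrt_eq_zero'.1 h) (by positivity)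
  funext t
  obtain ⟨s, hs, hts⟩ := hp.exists_mem_Ico₀ two_pi_pos t
  by_contra hne
  refine hint.not_gt (intervalIntegral.integral_pos two_pi_pos (hf.pow 2).continuousOn
    (fun _ _ => sq_nonneg _) ⟨s, Ico_subset_Icc_self hs, ?_⟩)
  rw [← hts]
  exact (sq_nonneg _).lt_of_ne (pow_ne_zero 2 hne).symm

def IsDeformationConstant (a : ℝ → ℝ) (M : ℝ) : Prop :=
  ∀ b : ℝ → ℝ, Continuous b → Periodic b (2 * π) → ∀ y : ℝ → ℝ,
    (∀ t, HasDerivAt y (a t * y t + b t) t) → Periodic y (2 * π) → ∀ t, |y t| ≤ M * rmsNorm b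

theorem IsDeformationConstant.abs_sub_le {a : ℝ → ℝ} {M : ℝ} (hM : IsDeformationConstant a M)
    {b₁ b₂ y₁ y₂ : ℝ → ℝ} (hb₁ : Continuous b₁) (hb₂ : Continuous b₂)
    (hb₁p : Periodic b₁ (2 * π)) (hb₂p : Periodic b₂ (2 * π))
    (hy₁ : ∀ t, HasDerivAt y₁ (a t * y₁ t + b₁ t) t)
    (hy₂ : ∀ t, HasDerivAt y₂ (a t * y₂ t + b₂ t) t)
    (hy₁p : Periodic y₁ (2 * π)) (hy₂p : Periodic y₂ (2 * π)) (t : ℝ) :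
    |y₁ t - y₂ t| ≤ M * rmsNorm (b₁ - b₂) :=
  hM _ (hb₁.sub hb₂) (hb₁p.sub hb₂p) _
    (fun t => ((hy₁ t).sub (hy₂ t)).congr_deriv (by simp only [Pi.sub_apply]; ring))
    (hy₁p.sub hy₂p) t

theorem IsDeformationConstant.pos {a : ℝ → ℝ} {M : ℝ} (hM : IsDeformationConstant a M)
    (hap : Periodic a (2 * π)) {U : Set ℝ} (hU : IsOpen U) (hUne : U.Nonempty)
    (haU : ContinuousOn a U) : 0 < M := by
  by_contra! hM0
  obtain ⟨t₀, ht₀⟩ := hUne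
  obtain ⟨ε, hε, hball⟩ := Metric.isOpen_iff.1 hU t₀ ht₀
  set δ := min (ε / 2) 1
  have hδ : 0 < δ := by positivity
  have hδε : δ < ε := (min_le_left _ _).trans_lt (half_lt_self hε)
  have hδπ : δ < π := (min_le_right _ _).trans_lt (by linarith [pi_gt_three])
  -- a smooth periodic bump `y` supported where `a` is continuous, so that `y' - a y` is continuous
  set g : ℝ → ℝ := fun t => cos (t - t₀) - cos δ
  set y : ℝ → ℝ := fun t => expNegInvGlue (g t)
  have hy : ContDiff ℝ 1 y := expNegInvGlue.contDiff.comp (by fun_prop)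
  have hyp : Periodic y (2 * π) := fun t => by simp [y, g, add_sub_right_comm]
  set b : ℝ → ℝ := fun t => deriv y t - a t * y t
  have hb : Continuous b := continuous_iff_continuousAt.2 fun t => by
    rcases lt_or_ge (g t) 0 with hneg | hnonneg
    · have hy0 : y =ᶠ[𝓝 t] 0 := ((continuous_cos.comp (continuous_sub_right t₀)).sub
        continuous_const |>.continuousAt.eventually (gt_mem_nhds hneg)).mono
        fun s hs => expNegInvGlue.zero_of_nonpos hs.le
      refine continuousAt_const.congr (f := fun _ => (0 : ℝ)) ?_
      filter_upwards [hy0, hy0.deriv] with s h₁ h₂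
      simp [b, h₁, h₂]
    · obtain ⟨k, hk⟩ := exists_int_abs_sub_mul_two_pi_le_of_cos_le hδ.le hδπ.le
        (sub_nonneg.1 hnonneg)
      have hmem : t - k * (2 * π) ∈ U := hball <| by
        rw [Metric.mem_ball, Real.dist_eq, sub_right_comm]; exact hk.trans_lt hδε
      have hat := hap.continuousAt_of_continuousAt_sub_int_mul k
        (haU.continuousAt (hU.mem_nhds hmem))
      exact (hy.continuous_deriv le_rfl).continuousAt.sub (hat.mul hy.continuous.continuousAt)
  have hbp : Periodic b (2 * π) := fun t => by simp only [b, hyp.deriv t, hap t, hyp t]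
  have hsol : ∀ t, HasDerivAt y (a t * y t + b t) t := fun t => by
    simpa [b] using (hy.differentiable one_ne_zero t).hasDerivAt
  have hy₀ : 0 < y t₀ := expNegInvGlue.pos_of_pos <| by
    simpa [g] using cos_lt_cos_of_nonneg_of_le_pi le_rfl hδπ.le hδ
  have := hM b hb hbp y hsol hyp t₀
  nlinarith [rmsNorm_nonneg b, abs_of_pos hy₀]

noncomputable def integratingFactor (a : ℝ → ℝ) (t : ℝ) : ℝ := exp (∫ s in (0 : ℝ)..t, a s)

/-- Variation of constants, with the constant chosen so that the values at `0` and `2π` agree;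
this needs `integratingFactor a (2 * π) ≠ 1`, i.e. `∫ t in 0..2 * π, a t ≠ 0`. -/
noncomputable def periodicSolution (a b : ℝ → ℝ) (t : ℝ) : ℝ :=
  integratingFactor a t *
    (integratingFactor a (2 * π) / (1 - integratingFactor a (2 * π)) *
        (∫ s in (0 : ℝ)..2 * π, b s / integratingFactor a s) +
      ∫ s in (0 : ℝ)..t, b s / integratingFactor a s)

section PeriodicSolution

variable {a b : ℝ → ℝ}

theorem hasDerivAt_integratingFactor (ha : Continuous a) (t : ℝ) :
    HasDerivAt (integratingFactor a) (a t * integratingFactor a t) t :=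
  ((ha.integral_hasStrictDerivAt 0 t).hasDerivAt.exp).congr_deriv (mul_comm _ _)

theorem continuous_integratingFactor (ha : Continuous a) : Continuous (integratingFactor a) :=
  continuous_iff_continuousAt.2 fun t => (hasDerivAt_integratingFactor ha t).continuousAt

theorem integratingFactor_add_two_pi (ha : Continuous a) (hap : Periodic a (2 * π)) (t : ℝ) :
    integratingFactor a (t + 2 * π) = integratingFactor a t * integratingFactor a (2 * π) := by
  simp only [integratingFactor]
  rw [hap.intervalIntegral_add_eq_add 0 t fun _ _ => ha.intervalIntegrable _ _, zero_add, exp_add]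

theorem hasDerivAt_periodicSolution (ha : Continuous a) (hb : Continuous b) (t : ℝ) :
    HasDerivAt (periodicSolution a b) (a t * periodicSolution a b t + b t) t := by
  have hg : Continuous fun s => b s / integratingFactor a s :=
    hb.div (continuous_integratingFactor ha) fun s => (exp_pos _).ne'
  refine ((hasDerivAt_integratingFactor ha t).mul
    (((hg.integral_hasStrictDerivAt 0 t).hasDerivAt).const_add
      (integratingFactor a (2 * π) / (1 - integratingFactor a (2 * π)) *
        ∫ s in (0 : ℝ)..2 * π, b s / integratingFactor a s))).congr_deriv ?_
  have : integratingFactor a t ≠ 0 := (exp_pos _).ne'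
  rw [periodicSolution]
  field_simp

theorem continuous_periodicSolution (ha : Continuous a) (hb : Continuous b) :
    Continuous (periodicSolution a b) :=
  continuous_iff_continuousAt.2 fun t => (hasDerivAt_periodicSolution ha hb t).continuousAt

theorem periodic_periodicSolution (ha : Continuous a) (hb : Continuous b) (hap : Periodic a (2 * π))
    (hbp : Periodic b (2 * π)) (hA : ∫ t in (0 : ℝ)..2 * π, a t ≠ 0) :
    Periodic (periodicSolution a b) (2 * π) := by
  intro t
  set μ := integratingFactor a (2 * π) with hμdef
  have hμ : μ ≠ 1 := by simpa [μ, integratingFactor] using hA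
  have hμ0 : μ ≠ 0 := (exp_pos _).ne'
  have hg : Continuous fun s => b s / integratingFactor a s :=
    hb.div (continuous_integratingFactor ha) fun s => (exp_pos _).ne'
  have hJ : ∫ s in (0 : ℝ)..t + 2 * π, b s / integratingFactor a s =
      (∫ s in (0 : ℝ)..2 * π, b s / integratingFactor a s) +
        (∫ s in (0 : ℝ)..t, b s / integratingFactor a s) / μ := by
    have hshift := intervalIntegral.integral_comp_add_right
      (fun s => b s / integratingFactor a s) (a := 0) (b := t) (2 * π)
    rw [zero_add] at hshift
    rw [← intervalIntegral.integral_add_adjacent_intervals (hg.intervalIntegrable 0 (2 * π))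
      (hg.intervalIntegrable _ _), ← hshift, ← intervalIntegral.integral_div]
    congr 1
    refine intervalIntegral.integral_congr fun s _ => ?_
    simp only [integratingFactor_add_two_pi ha hap, hbp s, μ]
    field_simp
  have h1 : 1 - μ ≠ 0 := sub_ne_zero.2 hμ.symm
  rw [periodicSolution, periodicSolution, integratingFactor_add_two_pi ha hap, hJ]
  generalize ∫ s in (0 : ℝ)..2 * π, b s / integratingFactor a s = J₀
  generalize ∫ s in (0 : ℝ)..t, b s / integratingFactor a s = J
  rw [← hμdef]
  field_simp
  ring

end PeriodicSolution

theorem IsDeformationConstant.abs_periodicSolution_le {a b : ℝ → ℝ} {M : ℝ}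
    (hM : IsDeformationConstant a M) (ha : Continuous a) (hap : Periodic a (2 * π))
    (hA : ∫ t in (0 : ℝ)..2 * π, a t ≠ 0) (hb : Continuous b) (hbp : Periodic b (2 * π)) (t : ℝ) :
    |periodicSolution a b t| ≤ M * rmsNorm b :=
  hM b hb hbp _ (hasDerivAt_periodicSolution ha hb) (periodic_periodicSolution ha hb hap hbp hA) t

theorem IsDeformationConstant.abs_periodicSolution_sub_le {a b₁ b₂ : ℝ → ℝ} {M : ℝ}
    (hM : IsDeformationConstant a M) (ha : Continuous a) (hap : Periodic a (2 * π))
    (hA : ∫ t in (0 : ℝ)..2 * π, a t ≠ 0) (hb₁ : Continuous b₁) (hb₂ : Continuous b₂)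
    (hb₁p : Periodic b₁ (2 * π)) (hb₂p : Periodic b₂ (2 * π)) (t : ℝ) :
    |periodicSolution a b₁ t - periodicSolution a b₂ t| ≤ M * rmsNorm (b₁ - b₂) :=
  hM.abs_sub_le hb₁ hb₂ hb₁p hb₂p (hasDerivAt_periodicSolution ha hb₁)
    (hasDerivAt_periodicSolution ha hb₂) (periodic_periodicSolution ha hb₁ hap hb₁p hA)
    (periodic_periodicSolution ha hb₂ hap hb₂p hA) t

theorem IsDeformationConstant.eq_periodicSolution {a b y : ℝ → ℝ} {M : ℝ}
    (hM : IsDeformationConstant a M) (ha : Continuous a) (hap : Periodic a (2 * π))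
    (hA : ∫ t in (0 : ℝ)..2 * π, a t ≠ 0) (hb : Continuous b) (hbp : Periodic b (2 * π))
    (hy : ∀ t, HasDerivAt y (a t * y t + b t) t) (hyp : Periodic y (2 * π)) :
    y = periodicSolution a b := funext fun t => by
  have := hM.abs_sub_le hb hb hbp hbp hy (hasDerivAt_periodicSolution ha hb) hyp
    (periodic_periodicSolution ha hb hap hbp hA) t
  simpa [rmsNorm, sub_eq_zero] using this

def periodicBall (r : ℝ) : Set (ℝ →ᵇ ℝ) := {z | Periodic z (2 * π) ∧ ∀ t, |z t| ≤ r}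

theorem isClosed_periodicBall (r : ℝ) : IsClosed (periodicBall r) := by
  simp only [periodicBall, Periodic, ofPred_and, ofPred_forall]
  exact (isClosed_iInter fun t => isClosed_eq (continuous_eval_const _)
    (continuous_eval_const _)).inter
      (isClosed_iInter fun t => isClosed_le (continuous_eval_const _).abs continuous_const)

section FixedPoint

variable {a : ℝ → ℝ} {M : ℝ} {G : ℝ → ℝ → ℝ} {r L c : ℝ}

theorem IsDeformationConstant.exists_unique_fixedPoint (hM : IsDeformationConstant a M)
    (hM0 : 0 ≤ M) (ha : Continuous a) (hap : Periodic a (2 * π))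
    (hA : ∫ t in (0 : ℝ)..2 * π, a t ≠ 0) (hG : Continuous (uncurry G))
    (hGp : ∀ t z, G (t + 2 * π) z = G t z) (hr : 0 ≤ r) (hL : 0 ≤ L)
    (hGL : ∀ t ∈ Icc 0 (2 * π), ∀ z₁ z₂, |z₁| ≤ r → |z₂| ≤ r →
      |G t z₁ - G t z₂| ≤ L * |z₁ - z₂|)
    (hG0c : ∀ t ∈ Icc 0 (2 * π), ∀ z, |z| ≤ r → |G t z - G t 0| ≤ c)
    (hML : M * L < 1) (hself : M * (rmsNorm (fun t => G t 0) + c) ≤ r) :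
    ∃ z ∈ periodicBall r, periodicSolution a (fun t => G t (z t)) = z ∧
      ∀ y ∈ periodicBall r, periodicSolution a (fun t => G t (y t)) = y → y = z := by
  have hGz : ∀ {z : ℝ → ℝ}, Continuous z → Continuous fun t => G t (z t) := fun hz =>
    hG.comp (continuous_id.prodMk hz)
  have hGzp : ∀ {z : ℝ → ℝ}, Periodic z (2 * π) → Periodic (fun t => G t (z t)) (2 * π) :=
    fun hz t => by simp only [hz t, hGp]
  set P : (ℝ → ℝ) → ℝ → ℝ := fun z => periodicSolution a fun t => G t (z t)
  have hPsub : ∀ {y z : ℝ → ℝ}, Continuous y → Continuous z → Periodic y (2 * π) →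
      Periodic z (2 * π) → ∀ t, |P y t - P z t| ≤ M * rmsNorm fun t => G t (y t) - G t (z t) :=
    fun hy hz hyp hzp => hM.abs_periodicSolution_sub_le ha hap hA (hGz hy) (hGz hz) (hGzp hyp)
      (hGzp hzp)
  have : CompleteSpace (periodicBall r) := (isClosed_periodicBall r).completeSpace_coe
  have : Nonempty (periodicBall r) := ⟨⟨0, fun _ => rfl, fun _ => by simpa using hr⟩⟩
  have hPB : ∀ z : periodicBall r, ∀ t, |P z.1 t| ≤ r := fun z t => by
    have h₀ : Continuous fun _ : ℝ => (0 : ℝ) := continuous_const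
    calc |P z.1 t| ≤ |P z.1 t - P (fun _ => 0) t| + |P (fun _ => 0) t| := by
          linarith [abs_sub_abs_le_abs_sub (P z.1 t) (P (fun _ => 0) t)]
      _ ≤ M * c + M * rmsNorm fun t => G t 0 := by
        gcongr
        · exact (hPsub z.1.continuous h₀ z.2.1 (fun _ => rfl) t).trans
            (mul_le_mul_of_nonneg_left (rmsNorm_le_of_abs_le ((hGz z.1.continuous).sub (hGz h₀))
              fun s hs => hG0c s hs _ (z.2.2 s)) hM0)
        · exact hM.abs_periodicSolution_le ha hap hA (hGz h₀) (hGzp fun _ => rfl) t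
      _ ≤ r := by linarith
  let T : periodicBall r → periodicBall r := fun z =>
    ⟨.ofNormedAddCommGroup (P z.1) (continuous_periodicSolution ha (hGz z.1.continuous)) r
      (hPB z),
      periodic_periodicSolution ha (hGz z.1.continuous) hap (hGzp z.2.1) hA, hPB z⟩
  have hT : ContractingWith (M * L).toNNReal T := by
    refine ⟨by simpa using hML, LipschitzWith.of_dist_le_mul fun z₁ z₂ => ?_⟩
    rw [Real.coe_toNNReal _ (by positivity), Subtype.dist_eq]
    refine (BoundedContinuousFunction.dist_le (by positivity)).2 fun t => ?_
    rw [Real.dist_eq, mul_assoc]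
    refine (hPsub z₁.1.continuous z₂.1.continuous z₁.2.1 z₂.2.1 t).trans
      (mul_le_mul_of_nonneg_left (rmsNorm_le_of_abs_le
        ((hGz z₁.1.continuous).sub (hGz z₂.1.continuous)) fun s hs => ?_) hM0)
    refine (hGL s hs _ _ (z₁.2.2 s) (z₂.2.2 s)).trans (mul_le_mul_of_nonneg_left ?_ hL)
    rw [← Real.dist_eq]
    exact (BoundedContinuousFunction.dist_coe_le_dist s).trans_eq (Subtype.dist_eq z₁ z₂).symm
  refine ⟨_, (hT.fixedPoint T).2, congrArg (fun w : periodicBall r => ⇑w.1)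
    (ContractingWith.fixedPoint_isFixedPt hT), fun y hy hyP => ?_⟩
  exact congrArg Subtype.val (hT.fixedPoint_unique (x := ⟨y, hy⟩)
    (Subtype.ext (BoundedContinuousFunction.ext fun t => congrFun hyP t)))

theorem IsDeformationConstant.exists_unique_periodic_solution (hM : IsDeformationConstant a M)
    (hM0 : 0 ≤ M) (ha : Continuous a) (hap : Periodic a (2 * π))
    (hA : ∫ t in (0 : ℝ)..2 * π, a t ≠ 0) (hG : Continuous (uncurry G))
    (hGp : ∀ t z, G (t + 2 * π) z = G t z) (hr : 0 ≤ r) (hL : 0 ≤ L)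
    (hGL : ∀ t ∈ Icc 0 (2 * π), ∀ z₁ z₂, |z₁| ≤ r → |z₂| ≤ r →
      |G t z₁ - G t z₂| ≤ L * |z₁ - z₂|)
    (hG0c : ∀ t ∈ Icc 0 (2 * π), ∀ z, |z| ≤ r → |G t z - G t 0| ≤ c)
    (hML : M * L < 1) (hself : M * (rmsNorm (fun t => G t 0) + c) ≤ r) :
    ∃ z : ℝ → ℝ, (∀ t, HasDerivAt z (a t * z t + G t (z t)) t) ∧ Periodic z (2 * π) ∧
      (∀ t, |z t| ≤ r) ∧ ∀ y : ℝ → ℝ, (∀ t, HasDerivAt y (a t * y t + G t (y t)) t) →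
        Periodic y (2 * π) → (∀ t, |y t| ≤ r) → y = z := by
  have hGz : ∀ {z : ℝ → ℝ}, Continuous z → Continuous fun t => G t (z t) := fun hz =>
    hG.comp (continuous_id.prodMk hz)
  obtain ⟨z, hzB, hz, huniq⟩ :=
    hM.exists_unique_fixedPoint hM0 ha hap hA hG hGp hr hL hGL hG0c hML hself
  refine ⟨z, fun t => ?_, hzB.1, hzB.2, fun y hy hyp hyr => ?_⟩
  · simpa only [hz] using hasDerivAt_periodicSolution ha (hGz z.continuous) t
  · have hyc : Continuous y := continuous_iff_continuousAt.2 fun t => (hy t).continuousAt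
    have hyP := hM.eq_periodicSolution ha hap hA (hGz hyc) (fun t => by simp only [hyp t, hGp])
      hy hyp
    exact congrArg (⇑) (huniq (.ofNormedAddCommGroup y hyc r hyr) ⟨hyp, hyr⟩ hyP.symm)

end FixedPoint

section PartialDerivative

variable {X Xx : ℝ → ℝ → ℝ} {xb : ℝ → ℝ}

theorem partialDeriv_add_two_pi (hX1 : ∀ x t, HasDerivAt (fun y => X y t) (Xx x t) x)
    (hXp : ∀ x t, X x (t + 2 * π) = X x t) (x t : ℝ) : Xx x (t + 2 * π) = Xx x t :=
  (hX1 x (t + 2 * π)).unique (by simpa only [hXp] using hX1 x t)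

noncomputable def diffQuotient (X : ℝ → ℝ → ℝ) (xb : ℝ → ℝ) (n : ℕ) (t : ℝ) : ℝ :=
  n * (X (xb t + (n : ℝ)⁻¹) t - X (xb t) t)

theorem continuous_diffQuotient (hX : Continuous fun p : ℝ × ℝ => X p.1 p.2) (hxb : Continuous xb)
    (n : ℕ) : Continuous (diffQuotient X xb n) :=
  continuous_const.mul ((hX.comp ((hxb.add continuous_const).prodMk continuous_id)).sub
    (hX.comp (hxb.prodMk continuous_id)))

theorem exists_isOpen_continuousOn_partialDeriv {Xxx : ℝ → ℝ → ℝ}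
    (hX1 : ∀ x t, HasDerivAt (fun y => X y t) (Xx x t) x)
    (hX2 : ∀ x t, HasDerivAt (fun y => Xx y t) (Xxx x t) x)
    (hX : Continuous fun p : ℝ × ℝ => X p.1 p.2) (hxb : Continuous xb) :
    ∃ U, IsOpen U ∧ U.Nonempty ∧ ContinuousOn (fun t => Xx (xb t) t) U := by
  refine exists_isOpen_continuousOn_of_abs_sub_le (continuous_diffQuotient hX hxb) fun t => ?_
  obtain ⟨C, hC, hC'⟩ := (hX2 (xb t) t).isBigO_sub.exists_pos
  exact ⟨C, eventually_abs_mul_sub_sub_deriv_le (hX1 · t) hC.le (by simpa using hC'.bound)⟩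

theorem continuous_partialDeriv (hX1 : ∀ x t, HasDerivAt (fun y => X y t) (Xx x t) x)
    (hX : Continuous fun p : ℝ × ℝ => X p.1 p.2) (hXp : ∀ x t, X x (t + 2 * π) = X x t)
    (hxb : Continuous xb) (hxbp : Periodic xb (2 * π)) {r K : ℝ} (hr : 0 < r) (hK0 : 0 ≤ K)
    (hK : ∀ t ∈ Icc 0 (2 * π), ∀ x ∈ Icc (xb t - r) (xb t + r),
      |Xx x t - Xx (xb t) t| ≤ K * |x - xb t|) :
    Continuous fun t => Xx (xb t) t := by
  rw [← continuousOn_univ]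
  refine (tendstoUniformlyOn_of_abs_sub_le (C := K) ?_).continuousOn
    (Frequently.of_forall fun n => (continuous_diffQuotient hX hxb n).continuousOn)
  filter_upwards [eventually_gt_atTop 0,
    (tendsto_inv_atTop_nhds_zero_nat (𝕜 := ℝ)).eventually (ge_mem_nhds hr)] with n hn hnr t _
  have hXxp := partialDeriv_add_two_pi hX1 hXp
  have hper : Periodic (fun t => |diffQuotient X xb n t - Xx (xb t) t|) (2 * π) := fun t => by
    simp only [diffQuotient, hxbp t, hXp, hXxp]
  obtain ⟨s, hs, hts⟩ := hper.exists_mem_Ico₀ two_pi_pos t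
  refine hts ▸ abs_mul_sub_sub_deriv_le (hX1 · s) hK0 hn fun x hx =>
    hK s (Ico_subset_Icc_self hs) x ⟨by linarith [hx.1, hr], by linarith [hx.2]⟩

theorem Icc_subset_Icc_sInf_sSup (hxb : Continuous xb) (hxbp : Periodic xb (2 * π)) {r : ℝ}
    (t : ℝ) : Icc (xb t - r) (xb t + r) ⊆ Icc (sInf (range xb) - r) (sSup (range xb) + r) := by
  have hbdd := hxbp.isBounded_of_continuous two_pi_pos.ne' hxb
  exact Icc_subset_Icc (by linarith [csInf_le hbdd.bddBelow (mem_range_self t)])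
    (by linarith [le_csSup hbdd.bddAbove (mem_range_self t)])

theorem abs_partialDeriv_sub_le {Xxx : ℝ → ℝ → ℝ}
    (hX2 : ∀ x t, HasDerivAt (fun y => Xx y t) (Xxx x t) x) (hxb : Continuous xb)
    (hxbp : Periodic xb (2 * π)) {r K : ℝ}
    (hK : ∀ x ∈ Icc (sInf (range xb) - r) (sSup (range xb) + r), ∀ t ∈ Icc 0 (2 * π),
      |Xxx x t| ≤ K)
    {t : ℝ} (ht : t ∈ Icc 0 (2 * π)) {x y : ℝ} (hx : x ∈ Icc (xb t - r) (xb t + r))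
    (hy : y ∈ Icc (xb t - r) (xb t + r)) : |Xx x t - Xx y t| ≤ K * |x - y| := by
  have hsub := Icc_subset_Icc_sInf_sSup hxb hxbp (r := r) t
  simpa only [Real.norm_eq_abs] using (convex_Icc _ _).norm_image_sub_le_of_norm_hasDerivWithin_le
    (fun z _ => (hX2 z t).hasDerivWithinAt) (fun z hz => hK z (hsub hz) t ht) hy hx

end PartialDerivative

section Main

variable {X Xx : ℝ → ℝ → ℝ} {xb xb' : ℝ → ℝ}

theorem exists_unique_periodic_solution_of_rmsNorm_eq_zero
    (hX : Continuous fun p : ℝ × ℝ => X p.1 p.2) (hXp : ∀ x t, X x (t + 2 * π) = X x t)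
    (hxb : ∀ t, HasDerivAt xb (xb' t) t) (hxb' : Continuous xb') (hxbp : Periodic xb (2 * π))
    {M S : ℝ} (hS : S = rmsNorm fun t => xb' t - X (xb t) t) (hS0 : S = 0) :
    ∃ x : ℝ → ℝ, (∀ t, HasDerivAt x (X (x t) t) t) ∧ Periodic x (2 * π) ∧
      (∀ t, |x t - xb t| ≤ 2 * M * S) ∧
      ∀ y : ℝ → ℝ, (∀ t, HasDerivAt y (X (y t) t) t) → Periodic y (2 * π) →
        (∀ t, |y t - xb t| ≤ 2 * M * S) → y = x := by
  have hxbc : Continuous xb := continuous_iff_continuousAt.2 fun t => (hxb t).continuousAt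
  have hxb'p := hxbp.periodic_of_hasDerivAt hxb
  have hw := eq_zero_of_rmsNorm_eq_zero (f := fun t => xb' t - X (xb t) t)
    (hxb'.sub (hX.comp (hxbc.prodMk continuous_id)))
    (fun t => by simp only [hxb'p t, hxbp t, hXp]) (hS ▸ hS0)
  refine ⟨xb, fun t => ?_, hxbp, fun t => by simp [hS0], fun y _ _ hy => funext fun t => ?_⟩
  · simpa [sub_eq_zero.1 (congrFun hw t)] using hxb t
  · simpa [hS0, sub_eq_zero] using hy t

theorem exists_unique_periodic_solution_of_rmsNorm_pos {Xxx : ℝ → ℝ → ℝ}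
    (hX1 : ∀ x t, HasDerivAt (fun y => X y t) (Xx x t) x)
    (hX2 : ∀ x t, HasDerivAt (fun y => Xx y t) (Xxx x t) x)
    (hX : Continuous fun p : ℝ × ℝ => X p.1 p.2) (hXp : ∀ x t, X x (t + 2 * π) = X x t)
    (hxb : ∀ t, HasDerivAt xb (xb' t) t) (hxb' : Continuous xb') (hxbp : Periodic xb (2 * π))
    (hnc : ∫ t in (0 : ℝ)..2 * π, Xx (xb t) t ≠ 0) {M S K : ℝ}
    (hM : IsDeformationConstant (fun t => Xx (xb t) t) M) (hM0 : 0 < M)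
    (hS : S = rmsNorm fun t => xb' t - X (xb t) t) (hS0 : 0 < S)
    (hK : ∀ x ∈ Icc (sInf (range xb) - 2 * M * S) (sSup (range xb) + 2 * M * S),
      ∀ t ∈ Icc 0 (2 * π), |Xxx x t| ≤ K)
    (hcontr : 2 * M ^ 2 * K * S < 1) :
    ∃ x : ℝ → ℝ, (∀ t, HasDerivAt x (X (x t) t) t) ∧ Periodic x (2 * π) ∧
      (∀ t, |x t - xb t| ≤ 2 * M * S) ∧
      ∀ y : ℝ → ℝ, (∀ t, HasDerivAt y (X (y t) t) t) → Periodic y (2 * π) →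
        (∀ t, |y t - xb t| ≤ 2 * M * S) → y = x := by
  set a : ℝ → ℝ := fun t => Xx (xb t) t
  set r := 2 * M * S
  have hr : 0 < r := by positivity
  have hxbc : Continuous xb := continuous_iff_continuousAt.2 fun t => (hxb t).continuousAt
  have hxb'p := hxbp.periodic_of_hasDerivAt hxb
  have hap : Periodic a (2 * π) := fun t => by
    simp only [a, hxbp t, partialDeriv_add_two_pi hX1 hXp]
  have hK0 : 0 ≤ K := (abs_nonneg _).trans (hK (xb 0)
    (Icc_subset_Icc_sInf_sSup hxbc hxbp 0 ⟨by linarith, by linarith⟩) 0 ⟨le_rfl, two_pi_pos.le⟩)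
  have hLip : ∀ t ∈ Icc 0 (2 * π), ∀ x ∈ Icc (xb t - r) (xb t + r),
      |Xx x t - Xx (xb t) t| ≤ K * |x - xb t| :=
    fun t ht x hx => abs_partialDeriv_sub_le hX2 hxbc hxbp hK ht hx ⟨by linarith, by linarith⟩
  have ha : Continuous a := continuous_partialDeriv hX1 hX hXp hxbc hxbp hr hK0 hLip
  set G : ℝ → ℝ → ℝ := fun t z => X (xb t + z) t - xb' t - a t * z
  have hG : Continuous (uncurry G) :=
    ((hX.comp (((hxbc.comp continuous_fst).add continuous_snd).prodMk continuous_fst)).sub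
      (hxb'.comp continuous_fst)).sub ((ha.comp continuous_fst).mul continuous_snd)
  have hG0 : rmsNorm (fun t => G t 0) = S := by
    rw [hS, rmsNorm, rmsNorm]
    congr 2
    exact intervalIntegral.integral_congr fun t _ => by simp only [G, add_zero, mul_zero]; ring
  obtain ⟨z, hz, hzp, hzr, huniq⟩ := hM.exists_unique_periodic_solution hM0.le ha hap hnc hG
    (fun t z => by simp only [G, hxbp t, hXp, hxb'p t, hap t]) hr.le (L := K * r)
    (c := K / 2 * r ^ 2) (by positivity)
    (fun t ht z₁ z₂ h₁ h₂ => by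
      convert abs_sub_deriv_mul_sub_le_of_lipschitz_Icc (hX1 · t) hK0 (hLip t ht) h₁ h₂ using 2
      simp only [G, a]; ring)
    (fun t ht z hz => by
      convert abs_sub_sub_deriv_mul_le_of_lipschitz_Icc (hX1 · t) hK0 (hLip t ht) hz using 2
      simp only [G, a, add_zero]; ring)
    (by nlinarith) (by rw [hG0]; nlinarith)
  refine ⟨xb + z, fun t => ?_, hxbp.add hzp, fun t => by simpa using hzr t,
    fun y hy hyp hyr => ?_⟩
  · exact ((hxb t).add (hz t)).congr_deriv (by simp only [G, Pi.add_apply]; ring)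
  · have := huniq (y - xb) (fun t => ((hy t).sub (hxb t)).congr_deriv ?_) (hyp.sub hxbp) hyr
    · rw [← this, add_sub_cancel]
    · simp only [G, Pi.sub_apply, add_sub_cancel]

end Main

theorem existence_uniqueness_periodic_solution_general
    (X Xx Xxx : ℝ → ℝ → ℝ)
    (hX1 : ∀ x t, HasDerivAt (fun y => X y t) (Xx x t) x)
    (hX2 : ∀ x t, HasDerivAt (fun y => Xx y t) (Xxx x t) x)
    (hXcont : Continuous fun p : ℝ × ℝ => X p.1 p.2)
    (hXper : ∀ x t, X x (t + 2*π) = X x t)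
    (xb xb' : ℝ → ℝ) (hxb : ∀ t, HasDerivAt xb (xb' t) t)
    (hxb' : Continuous xb') (hxbper : ∀ t, xb (t + 2*π) = xb t)
    (hnc : (∫ t in (0:ℝ)..(2*π), Xx (xb t) t) ≠ 0)
    (M : ℝ)
    (hM : ∀ b : ℝ → ℝ, Continuous b → (∀ t, b (t + 2*π) = b t) →
      ∀ y : ℝ → ℝ, (∀ t, HasDerivAt y (Xx (xb t) t * y t + b t) t) →
        (∀ t, y (t + 2*π) = y t) →
        ∀ t, |y t| ≤ M * Real.sqrt ((1/(2*π)) * ∫ s in (0:ℝ)..(2*π), (b s)^2))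
    (S : ℝ)
    (hS : S = Real.sqrt ((1/(2*π)) * ∫ t in (0:ℝ)..(2*π), (xb' t - X (xb t) t)^2))
    (K : ℝ)
    (hK : ∀ x ∈ Set.Icc (sInf (Set.range xb) - 2*M*S) (sSup (Set.range xb) + 2*M*S),
      ∀ t ∈ Set.Icc (0:ℝ) (2*π), |Xxx x t| ≤ K)
    (hcontr : 2*M^2*K*S < 1) :
    ∃ x : ℝ → ℝ, (∀ t, HasDerivAt x (X (x t) t) t) ∧ (∀ t, x (t + 2*π) = x t) ∧
      (∀ t, |x t - xb t| ≤ 2*M*S) ∧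
      (∀ y : ℝ → ℝ, (∀ t, HasDerivAt y (X (y t) t) t) → (∀ t, y (t + 2*π) = y t) →
        (∀ t, |y t - xb t| ≤ 2*M*S) → y = x) := by
  have hxbc : Continuous xb := continuous_iff_continuousAt.2 fun t => (hxb t).continuousAt
  have hap : Periodic (fun t => Xx (xb t) t) (2 * π) := fun t => by
    simp only [hxbper t, partialDeriv_add_two_pi hX1 hXper]
  obtain ⟨U, hU, hUne, haU⟩ := exists_isOpen_continuousOn_partialDeriv hX1 hX2 hXcont hxbc
  have hM0 : 0 < M := IsDeformationConstant.pos hM hap hU hUne haU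
  rcases (show 0 ≤ S from hS ▸ rmsNorm_nonneg _).eq_or_lt with hS0 | hS0
  · exact exists_unique_periodic_solution_of_rmsNorm_eq_zero hXcont hXper hxb hxb' hxbper hS
      hS0.symm
  · exact exists_unique_periodic_solution_of_rmsNorm_pos hX1 hX2 hXcont hXper hxb hxb' hxbper hnc
      hM hM0 hS hS0 hK hcontr

/-- Main theorem (Stokes–Urabe type): if x̄ is a noncritical approximate periodic solution
with deformation constant M, accuracy S, second-derivative bound K on the strip, and
2M²KS < 1, then there is an actual 2π-periodic solution x* with ‖x*-x̄‖_∞ ≤ 2MS, and it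
is the unique periodic solution contained in this strip. -/
theorem existence_uniqueness_periodic_solution
    (Ω : Set ℝ) (hΩ : IsOpen Ω)
    (X Xx Xxx : ℝ → ℝ → ℝ)
    (hX1 : ∀ x t, HasDerivAt (fun y => X y t) (Xx x t) x)
    (hX2 : ∀ x t, HasDerivAt (fun y => Xx y t) (Xxx x t) x)
    (hXcont : Continuous fun p : ℝ × ℝ => X p.1 p.2)
    (hXper : ∀ x t, X x (t + 2*π) = X x t)
    (xb xb' : ℝ → ℝ) (hxb : ∀ t, HasDerivAt xb (xb' t) t)
    (hxb' : Continuous xb') (hxbper : ∀ t, xb (t + 2*π) = xb t)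
    (hnc : (∫ t in (0:ℝ)..(2*π), Xx (xb t) t) ≠ 0)
    (M : ℝ)
    (hM : ∀ b : ℝ → ℝ, Continuous b → (∀ t, b (t + 2*π) = b t) →
      ∀ y : ℝ → ℝ, (∀ t, HasDerivAt y (Xx (xb t) t * y t + b t) t) →
        (∀ t, y (t + 2*π) = y t) →
        ∀ t, |y t| ≤ M * Real.sqrt ((1/(2*π)) * ∫ s in (0:ℝ)..(2*π), (b s)^2))
    (S : ℝ)
    (hS : S = Real.sqrt ((1/(2*π)) * ∫ t in (0:ℝ)..(2*π), (xb' t - X (xb t) t)^2))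
    (K : ℝ)
    (hI : Set.Icc (sInf (Set.range xb) - 2*M*S) (sSup (Set.range xb) + 2*M*S) ⊆ Ω)
    (hK : ∀ x ∈ Set.Icc (sInf (Set.range xb) - 2*M*S) (sSup (Set.range xb) + 2*M*S),
      ∀ t ∈ Set.Icc (0:ℝ) (2*π), |Xxx x t| ≤ K)
    (hcontr : 2*M^2*K*S < 1) :
    ∃ x : ℝ → ℝ, (∀ t, HasDerivAt x (X (x t) t) t) ∧ (∀ t, x (t + 2*π) = x t) ∧
      (∀ t, |x t - xb t| ≤ 2*M*S) ∧
      (∀ y : ℝ → ℝ, (∀ t, HasDerivAt y (X (y t) t) t) → (∀ t, y (t + 2*π) = y t) →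
        (∀ t, |y t - xb t| ≤ 2*M*S) → y = x) :=
  existence_uniqueness_periodic_solution_general X Xx Xxx hX1 hX2 hXcont hXper xb xb' hxb hxb'
    hxbper hnc M hM S hS K hK hcontr
end

section
/- Under the hypotheses of the previous existence theorem (noncritical approximate solution $\bar{x}$ with deformation constant $M$, accuracy $S$, second-derivative bound $K$ on the strip $I$, and $2M^2KS<1$), if in addition $|\int_0^{2\pi}\partial_x X(\bar{x}(t),t)\,dt|>2\pi/M$, then the periodic solution $x^*$ with $\|x^*-\bar{x}\|_\infty\le 2MS$ satisfies $\int_0^{2\pi}\partial_x X(x^*(t),t)\,dt\neq 0$, and its sign equals that of $\int_0^{2\pi}\partial_x X(\bar{x}(t),t)\,dt$; hence $x^*$ is hyperbolic. -/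
/-!
Along `x̄` and `x*` the integrands `∂ₓX(x̄(t),t)` and `∂ₓX(x*(t),t)` differ by at most
`K · 2MS`, because `|x* - x̄| ≤ 2MS` and `|∂ₓ²X| ≤ K` on the strip containing both curves.
Hence the two integrals over `[0, 2π]` differ by at most `4πKMS = (2π/M) · 2M²KS < 2π/M`,
which is smaller than the modulus of the integral along `x̄`; so both have the same sign.
-/

open Real Set MeasureTheory
open scoped Interval

lemma mul_pos_of_abs_sub_lt_abs {a b : ℝ} (h : |b - a| < |a|) : 0 < a * b := by
  have hab : -(|a| * |b - a|) ≤ a * (b - a) := by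
    rw [← abs_mul]
    exact neg_abs_le _
  nlinarith [sq_abs a, mul_lt_mul_of_pos_left h ((abs_nonneg _).trans_lt h)]

lemma mem_Icc_sInf_sub_sSup_add {ι : Type*} {f : ι → ℝ} {i : ι} {y r : ℝ}
    (hbelow : BddBelow (range f)) (habove : BddAbove (range f)) (h : |y - f i| ≤ r) :
    y ∈ Icc (sInf (range f) - r) (sSup (range f) + r) := by
  have hfi := abs_le.1 h
  exact ⟨by linarith [csInf_le hbelow ⟨i, rfl⟩], by linarith [le_csSup habove ⟨i, rfl⟩]⟩

lemma abs_sub_le_of_hasDerivAt_of_abs_le {f f' : ℝ → ℝ} {a b K x y : ℝ}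
    (hf : ∀ z, HasDerivAt f (f' z) z) (hK : ∀ z ∈ Icc a b, |f' z| ≤ K)
    (hx : x ∈ Icc a b) (hy : y ∈ Icc a b) : |f x - f y| ≤ K * |x - y| := by
  simpa only [Real.norm_eq_abs] using (convex_Icc a b).norm_image_sub_le_of_norm_hasDerivWithin_le
    (fun z _ => (hf z).hasDerivWithinAt) hK hy hx

lemma measurable_uncurry_of_hasDerivAt_fst {F F' : ℝ → ℝ → ℝ}
    (hF : Continuous fun p : ℝ × ℝ => F p.1 p.2)
    (hF' : ∀ x t, HasDerivAt (fun y => F y t) (F' x t) x) :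
    Measurable fun p : ℝ × ℝ => F' p.1 p.2 := by
  have hderiv := (measurable_deriv_with_param (f := fun t y => F y t)
    (hF.comp continuous_swap)).comp measurable_swap
  convert hderiv using 1
  ext p
  exact ((hF' p.1 p.2).deriv).symm

lemma abs_intervalIntegral_sub_le_of_abs_sub_le {f g : ℝ → ℝ} {a b C : ℝ}
    (hg : IntervalIntegrable g volume a b) (hf : AEStronglyMeasurable f (volume.restrict (Ι a b)))
    (h : ∀ t ∈ Ι a b, |f t - g t| ≤ C) :
    |(∫ t in a..b, f t) - ∫ t in a..b, g t| ≤ C * |b - a| := by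
  have hfg : IntervalIntegrable (f - g) volume a b := by
    rw [intervalIntegrable_iff]
    refine Integrable.mono' (integrableOn_const (s := Ι a b) (C := C) measure_Ioc_lt_top.ne)
      (hf.sub (intervalIntegrable_iff.1 hg).aestronglyMeasurable) ?_
    filter_upwards [ae_restrict_mem measurableSet_uIoc] with t ht using h t ht
  have hf' : IntervalIntegrable f volume a b := by simpa using hfg.add hg
  rw [← intervalIntegral.integral_sub hf' hg]
  exact intervalIntegral.norm_integral_le_of_norm_le_const (f := fun t => f t - g t) h

theorem hyperbolicity_periodic_solution_general
    (X Xx Xxx : ℝ → ℝ → ℝ)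
    (hX1 : ∀ x t, HasDerivAt (fun y => X y t) (Xx x t) x)
    (hX2 : ∀ x t, HasDerivAt (fun y => Xx y t) (Xxx x t) x)
    (hXcont : Continuous fun p : ℝ × ℝ => X p.1 p.2)
    (xb xb' : ℝ → ℝ) (hxb : ∀ t, HasDerivAt xb (xb' t) t)
    (hxbper : ∀ t, xb (t + 2*π) = xb t)
    (M : ℝ) (hM0 : 0 < M)
    (S : ℝ)
    (K : ℝ)
    (hK : ∀ x ∈ Set.Icc (sInf (Set.range xb) - 2*M*S) (sSup (Set.range xb) + 2*M*S),
      ∀ t ∈ Set.Icc (0:ℝ) (2*π), |Xxx x t| ≤ K)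
    (hcontr : 2*M^2*K*S < 1)
    (hbig : |∫ t in (0:ℝ)..(2*π), Xx (xb t) t| > 2*π/M) :
    ∀ x : ℝ → ℝ, (∀ t, HasDerivAt x (X (x t) t) t) → (∀ t, x (t + 2*π) = x t) →
      (∀ t, |x t - xb t| ≤ 2*M*S) →
      (∫ t in (0:ℝ)..(2*π), Xx (x t) t) ≠ 0 ∧
      0 < (∫ t in (0:ℝ)..(2*π), Xx (xb t) t) * (∫ t in (0:ℝ)..(2*π), Xx (x t) t) := by
  intro x hx _ hclose
  set I := Icc (sInf (range xb) - 2*M*S) (sSup (range xb) + 2*M*S)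
  set a := ∫ t in (0:ℝ)..(2*π), Xx (xb t) t
  set b := ∫ t in (0:ℝ)..(2*π), Xx (x t) t
  have hxb_cont : Continuous xb := continuous_iff_continuousAt.2 fun t => (hxb t).continuousAt
  have hx_cont : Continuous x := continuous_iff_continuousAt.2 fun t => (hx t).continuousAt
  have hrange : IsCompact (range xb) :=
    Function.Periodic.compact_of_continuous hxbper (by positivity) hxb_cont
  have hstrip : ∀ t {y}, |y - xb t| ≤ 2*M*S → y ∈ I :=
    fun _ _ => mem_Icc_sInf_sub_sSup_add hrange.bddBelow hrange.bddAbove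
  have hxb_mem : ∀ t, xb t ∈ I :=
    fun t => hstrip t (by simpa using (abs_nonneg _).trans (hclose t))
  have hK0 : 0 ≤ K := (abs_nonneg _).trans (hK _ (hxb_mem 0) 0 ⟨le_rfl, by positivity⟩)
  have hpointwise : ∀ t ∈ Ι 0 (2*π), |Xx (x t) t - Xx (xb t) t| ≤ K * (2*M*S) := by
    intro t ht
    rw [uIoc_of_le (by positivity)] at ht
    calc |Xx (x t) t - Xx (xb t) t| ≤ K * |x t - xb t| :=
          abs_sub_le_of_hasDerivAt_of_abs_le (fun y => hX2 y t)
            (fun y hy => hK y hy t (Ioc_subset_Icc_self ht)) (hstrip t (hclose t)) (hxb_mem t)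
      _ ≤ K * (2*M*S) := by gcongr; exact hclose t
  have ha : a ≠ 0 := abs_pos.1 ((by positivity : (0:ℝ) < 2*π/M).trans hbig)
  have hx_meas : AEStronglyMeasurable (fun t => Xx (x t) t) (volume.restrict (Ι 0 (2*π))) :=
    ((measurable_uncurry_of_hasDerivAt_fst hXcont hX1).comp
      (hx_cont.measurable.prodMk measurable_id)).aestronglyMeasurable
  have hclose_int : |b - a| < |a| :=
    calc |b - a| ≤ K * (2*M*S) * |2*π - 0| :=
          abs_intervalIntegral_sub_le_of_abs_sub_le
            (intervalIntegral.intervalIntegrable_of_integral_ne_zero ha) hx_meas hpointwise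
      _ = 2*π/M * (2*M^2*K*S) := by
          rw [sub_zero, abs_of_pos (by positivity)]
          field_simp
      _ < 2*π/M := mul_lt_of_lt_one_right (by positivity) hcontr
      _ < |a| := hbig
  have hpos := mul_pos_of_abs_sub_lt_abs hclose_int
  exact ⟨right_ne_zero_of_mul hpos.ne', hpos⟩

/-- Hyperbolicity part of the main theorem: under the hypotheses of the existence
theorem, if moreover |∫₀^{2π} ∂ₓX(x̄(t),t) dt| > 2π/M, then every periodic solution x*
with ‖x*-x̄‖_∞ ≤ 2MS satisfies ∫₀^{2π} ∂ₓX(x*(t),t) dt ≠ 0 with the same sign as the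
integral along x̄; hence x* is hyperbolic. -/
theorem hyperbolicity_periodic_solution
    (Ω : Set ℝ) (hΩ : IsOpen Ω)
    (X Xx Xxx : ℝ → ℝ → ℝ)
    (hX1 : ∀ x t, HasDerivAt (fun y => X y t) (Xx x t) x)
    (hX2 : ∀ x t, HasDerivAt (fun y => Xx y t) (Xxx x t) x)
    (hXcont : Continuous fun p : ℝ × ℝ => X p.1 p.2)
    (hXper : ∀ x t, X x (t + 2*π) = X x t)
    (xb xb' : ℝ → ℝ) (hxb : ∀ t, HasDerivAt xb (xb' t) t)
    (hxb' : Continuous xb') (hxbper : ∀ t, xb (t + 2*π) = xb t)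
    (hnc : (∫ t in (0:ℝ)..(2*π), Xx (xb t) t) ≠ 0)
    (M : ℝ) (hM0 : 0 < M)
    (hM : ∀ b : ℝ → ℝ, Continuous b → (∀ t, b (t + 2*π) = b t) →
      ∀ y : ℝ → ℝ, (∀ t, HasDerivAt y (Xx (xb t) t * y t + b t) t) →
        (∀ t, y (t + 2*π) = y t) →
        ∀ t, |y t| ≤ M * Real.sqrt ((1/(2*π)) * ∫ s in (0:ℝ)..(2*π), (b s)^2))
    (S : ℝ)
    (hS : S = Real.sqrt ((1/(2*π)) * ∫ t in (0:ℝ)..(2*π), (xb' t - X (xb t) t)^2))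
    (K : ℝ)
    (hI : Set.Icc (sInf (Set.range xb) - 2*M*S) (sSup (Set.range xb) + 2*M*S) ⊆ Ω)
    (hK : ∀ x ∈ Set.Icc (sInf (Set.range xb) - 2*M*S) (sSup (Set.range xb) + 2*M*S),
      ∀ t ∈ Set.Icc (0:ℝ) (2*π), |Xxx x t| ≤ K)
    (hcontr : 2*M^2*K*S < 1)
    (hbig : |∫ t in (0:ℝ)..(2*π), Xx (xb t) t| > 2*π/M) :
    ∀ x : ℝ → ℝ, (∀ t, HasDerivAt x (X (x t) t) t) → (∀ t, x (t + 2*π) = x t) →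
      (∀ t, |x t - xb t| ≤ 2*M*S) →
      (∫ t in (0:ℝ)..(2*π), Xx (x t) t) ≠ 0 ∧
      0 < (∫ t in (0:ℝ)..(2*π), Xx (xb t) t) * (∫ t in (0:ℝ)..(2*π), Xx (x t) t) :=
  hyperbolicity_periodic_solution_general X Xx Xxx hX1 hX2 hXcont xb xb' hxb hxbper M hM0 S K hK
    hcontr hbig
end

section
/- Let $X(r,t)=-r+(\cos(2t)+\sin(2t)+2)r^3$ and $r^*(t)=\frac{1}{\sqrt{2+\cos(2t)}}$. Then $\int_0^{2\pi}\frac{\partial X}{\partial r}(r^*(t),t)\,dt=4\pi$; in particular the periodic solution $r^*$ is hyperbolic and unstable. -/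
open Real intervalIntegral

/-! Along `r*` one has `r*² = 1/(2 + cos 2t)`, so the integrand is
`2 + 3 sin 2t / (2 + cos 2t)`. The second term is the derivative of the `π`-periodic
function `-(3/2) log (2 + cos 2t)` and integrates to zero over a period, leaving `4π`. -/

lemma two_add_cos_pos (x : ℝ) : 0 < 2 + cos x := by
  linarith [neg_one_le_cos x]

lemma derivative_along_solution_eq (t : ℝ) :
    -1 + 3 * (cos (2 * t) + sin (2 * t) + 2) * (1 / √(2 + cos (2 * t))) ^ 2
      = 2 + 3 * (sin (2 * t) / (2 + cos (2 * t))) := by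
  have hpos := two_add_cos_pos (2 * t)
  rw [div_pow, one_pow, sq_sqrt hpos.le]
  field_simp
  ring

lemma hasDerivAt_log_two_add_cos_two_mul (t : ℝ) :
    HasDerivAt (fun t => log (2 + cos (2 * t)))
      (-2 * (sin (2 * t) / (2 + cos (2 * t)))) t := by
  have hcos : HasDerivAt (fun t => 2 + cos (2 * t)) (-sin (2 * t) * 2) t :=
    ((hasDerivAt_cos (2 * t)).comp t ((hasDerivAt_id t).const_mul 2)).const_add 2
      |>.congr_deriv (by simp)
  convert hcos.log (two_add_cos_pos _).ne' using 1
  ring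

lemma continuous_sin_two_mul_div_two_add_cos_two_mul :
    Continuous fun t : ℝ => sin (2 * t) / (2 + cos (2 * t)) :=
  .div (by fun_prop) (by fun_prop) fun t => (two_add_cos_pos _).ne'

lemma integral_sin_two_mul_div_two_add_cos_two_mul :
    ∫ t in (0 : ℝ)..(2 * π), sin (2 * t) / (2 + cos (2 * t)) = 0 := by
  have hFTC := integral_eq_sub_of_hasDerivAt (fun t _ => hasDerivAt_log_two_add_cos_two_mul t)
    ((continuous_sin_two_mul_div_two_add_cos_two_mul.const_mul (-2)).intervalIntegrable 0 (2 * π))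
  have hcos : cos (2 * (2 * π)) = cos (2 * 0) := by
    simpa using (cos_periodic.nat_mul 2).eq
  rw [integral_const_mul, hcos, sub_self] at hFTC
  simpa using hFTC

/-- ∫₀^{2π} ∂ᵣX(r*(t),t) dt = 4π for X(r,t) = -r + (cos 2t + sin 2t + 2)r³ and
r*(t) = 1/√(2+cos 2t); in particular the integral is nonzero (hyperbolicity) and
positive (instability). -/
theorem integral_along_solution_eq_four_pi :
    (∫ t in (0:ℝ)..(2*π),
      (-1 + 3 * (Real.cos (2*t) + Real.sin (2*t) + 2) *
        (1 / Real.sqrt (2 + Real.cos (2*t)))^2)) = 4*π ∧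
    (0:ℝ) < 4*π := by
  refine ⟨?_, by positivity⟩
  have hint := continuous_sin_two_mul_div_two_add_cos_two_mul.intervalIntegrable
    (μ := MeasureTheory.volume) 0 (2 * π)
  calc _ = ∫ t in (0 : ℝ)..(2 * π), (2 + 3 * (sin (2 * t) / (2 + cos (2 * t)))) :=
        integral_congr fun t _ => derivative_along_solution_eq t
    _ = 2 * (2 * π) + 3 * ∫ t in (0 : ℝ)..(2 * π), sin (2 * t) / (2 + cos (2 * t)) := by
        rw [integral_add (by simp) (hint.const_mul 3), integral_const_mul,
          integral_const, smul_eq_mul, sub_zero, mul_comm]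
    _ = 4 * π := by
        rw [integral_sin_two_mul_div_two_add_cos_two_mul]
        ring
end

section
/- Let $\bar{r}(t)=\frac{44}{59}-\frac{24}{119}\cos(2t)+\frac{2}{49}\cos(4t)-\frac{1}{110}\cos(6t)+\frac{1}{468}\cos(8t)$. Then $\frac12\le\bar{r}(t)\le 1$ for all $t\in\mathbb{R}$. -/
open Real

/-- Bounds for the harmonic-balance approximation r̄. -/
theorem rbar_bounds
    (rb : ℝ → ℝ)
    (hrb : ∀ t, rb t = 44/59 - (24/119) * Real.cos (2*t) + (2/49) * Real.cos (4*t)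
      - (1/110) * Real.cos (6*t) + (1/468) * Real.cos (8*t)) :
    ∀ t, 1/2 ≤ rb t ∧ rb t ≤ 1 := by
  intro t
  rw [hrb t]
  have h4 : Real.cos (4*t) = 2 * Real.cos (2*t) ^ 2 - 1 := by
    rw [show (4:ℝ)*t = 2*(2*t) by ring, Real.cos_two_mul]
  have h6 : Real.cos (6*t) = 4 * Real.cos (2*t) ^ 3 - 3 * Real.cos (2*t) := by
    rw [show (6:ℝ)*t = 3*(2*t) by ring, Real.cos_three_mul]
  have h8 : Real.cos (8*t) = 2 * Real.cos (4*t) ^ 2 - 1 := by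
    rw [show (8:ℝ)*t = 2*(4*t) by ring, Real.cos_two_mul]
  set x := Real.cos (2*t) with hx
  have hb1 : -1 ≤ x := Real.neg_one_le_cos _
  have hb2 : x ≤ 1 := Real.cos_le_one _
  rw [h8, h4, h6]
  constructor
  · nlinarith [sq_nonneg (1-x), sq_nonneg (1+x), sq_nonneg x, sq_nonneg (x*(1-x)), sq_nonneg (x*(1+x)), sq_nonneg (x^2-1)]
  · nlinarith [sq_nonneg (1-x), sq_nonneg (1+x), sq_nonneg x, sq_nonneg (x*(1-x)), sq_nonneg (x*(1+x)), sq_nonneg (x^2-1)]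
end
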